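/- In the X3C-to-FMBR reduction, if there exists a permutation π of the branch-strings such that S1^π is a subsequence of S2, then the X3C instance has a solution: there exist n indices p1,…,pn with ∪_j Q_{pj} = U. -/

import Mathlib

/-- The alphabet `Σ = {u_1, …, u_{3n}, *, Y, Z}` of the X3C-to-FMBR reduction:
the universe elements (none of which equals `*`, `Y` or `Z`) plus three special
characters. -/
inductive XChar (n : ℕ) : Type where
  | elt : Fin (3 * n) → XChar n
  | star : XChar n
  | Y : XChar n
  | Z : XChar n
deriving DecidableEq

/-- The `3n + m` branch-strings of `P1`: the `3n` single-character strings
`u_1, …, u_{3n}`, together with `n` copies of `Y*` and `m - n` copies of `YZ`. -/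
def branchStrings (n m : ℕ) : List (List (XChar n)) :=
  ((List.finRange (3 * n)).map fun i => [XChar.elt i]) ++
    List.replicate n [XChar.Y, XChar.star] ++
    List.replicate (m - n) [XChar.Y, XChar.Z]

/-- The block `H_i = * · Q_i · Z · Y`, where `Q_i` is written as the concatenation of
its elements in their fixed order. -/
def hBlock {n : ℕ} (Qi : List (Fin (3 * n))) : List (XChar n) :=
  XChar.star :: (Qi.map XChar.elt ++ [XChar.Z, XChar.Y])

/-- The string `S2 = Y · H_1 ⋯ H_m`. -/
def xS2 (n m : ℕ) (Q : Fin m → List (Fin (3 * n))) : List (XChar n) :=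
  XChar.Y :: ((List.finRange m).map fun i => hBlock (Q i)).flatten


open List

variable {α : Type*}

/-- One step of the Y-alignment: with equal counts of the separator `a` on the tails,
a sublist relation splits at the separator. -/
lemma sublist_split [DecidableEq α] {a : α} {s₁ s₂ t₁ t₂ : List α}
    (h : (s₁ ++ a :: s₂) <+ (t₁ ++ a :: t₂)) (hs : a ∉ s₁) (ht : a ∉ t₁)
    (hc : s₂.count a = t₂.count a) : s₁ <+ t₁ ∧ s₂ <+ t₂ := by
  obtain ⟨l₁, l₂, heq, h₁, h₂⟩ := List.sublist_append_iff.mp h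
  have hal₁ : a ∉ l₁ := fun hm => ht (h₁.subset hm)
  have key : l₁ = s₁ ∧ l₂ = a :: s₂ := by
    rcases List.append_eq_append_iff.mp heq with ⟨w, hw1, hw2⟩ | ⟨w, hw1, hw2⟩
    · -- l₁ = s₁ ++ w, a :: s₂ = w ++ l₂
      cases w with
      | nil => simp at hw1 hw2; exact ⟨hw1, hw2.symm⟩
      | cons x w' =>
        exfalso
        have hx : x = a := by simpa using congrArg (fun l => l.head?) hw2.symm
        exact hal₁ (by rw [hw1, hx]; simp)
    · -- s₁ = l₁ ++ w, l₂ = w ++ a :: s₂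
      have haw : a ∉ w := fun hm => hs (by rw [hw1]; simp [hm])
      cases w with
      | nil => simp at hw1 hw2; exact ⟨hw1.symm, hw2⟩
      | cons x w' =>
        exfalso
        rw [hw2] at h₂
        cases h₂ with
        | cons _ h' =>
          have := h'.count_le a
          simp [List.count_append, List.count_cons, hc] at this
          omega
        | cons_cons _ h' => exact haw (by simp)
  obtain ⟨rfl, rfl2⟩ := key
  rw [rfl2] at h₂
  exact ⟨h₁, List.cons_sublist_cons.mp h₂⟩

/-- Glue a list of `a`-free segments with separator `a` after each. -/
def glue (a : α) (L : List (List α)) : List α := (L.map (· ++ [a])).flatten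

lemma glue_nil (a : α) : glue a [] = [] := rfl

lemma glue_cons (a : α) (l : List α) (L : List (List α)) :
    glue a (l :: L) = l ++ a :: glue a L := by simp [glue]

lemma count_glue [DecidableEq α] {a : α} {L : List (List α)} (h : ∀ l ∈ L, a ∉ l) :
    (glue a L).count a = L.length := by
  induction L with
  | nil => rfl
  | cons l L ih =>
    rw [glue_cons]
    have h1 : a ∉ l := h l (by simp)
    simp [List.count_append, List.count_cons, List.count_eq_zero.mpr h1,
      ih fun x hx => h x (by simp [hx])]

lemma glue_align [DecidableEq α] {a : α} : ∀ {P C : List (List α)},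
    glue a P <+ glue a C → P.length = C.length →
    (∀ l ∈ P, a ∉ l) → (∀ l ∈ C, a ∉ l) → List.Forall₂ (· <+ ·) P C := by
  intro P
  induction P with
  | nil =>
    intro C _ hlen _ _
    cases C with
    | nil => exact .nil
    | cons _ _ => simp at hlen
  | cons p P ih =>
    intro C h hlen hP hC
    cases C with
    | nil => simp at hlen
    | cons c C =>
      rw [glue_cons, glue_cons] at h
      have hcnt : (glue a P).count a = (glue a C).count a := by
        rw [count_glue fun x hx => hP x (by simp [hx]),
          count_glue fun x hx => hC x (by simp [hx])]
        simpa using hlen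
      obtain ⟨h1, h2⟩ := sublist_split h (hP p (by simp)) (hC c (by simp)) hcnt
      exact .cons h1 (ih h2 (by simpa using hlen)
        (fun x hx => hP x (by simp [hx])) (fun x hx => hC x (by simp [hx])))

open XChar in
/-- Any list of branch-strings decomposes into a leading run of element singletons
followed by `Y`-groups, each a `Y`, then `*` or `Z`, then a run of elements. -/
lemma decompB {n : ℕ} (B : List (List (XChar n)))
    (hB : ∀ b ∈ B, (∃ i, b = [elt i]) ∨ b = [Y, star] ∨ b = [Y, Z]) :
    ∃ (e : List (Fin (3 * n))) (g : List (XChar n × List (Fin (3 * n)))),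
      B.flatten = e.map elt ++ (g.map fun p => Y :: p.1 :: p.2.map elt).flatten ∧
      ∀ p ∈ g, p.1 = star ∨ p.1 = Z := by
  induction B with
  | nil => exact ⟨[], [], rfl, by simp⟩
  | cons b B ih =>
    obtain ⟨e, g, hflat, hg⟩ := ih fun x hx => hB x (by simp [hx])
    rcases hB b (by simp) with ⟨i, rfl⟩ | rfl | rfl
    · exact ⟨i :: e, g, by simp [hflat], hg⟩
    · refine ⟨[], (star, e) :: g, by simp [hflat], ?_⟩
      intro p hp
      rcases List.mem_cons.mp hp with rfl | hp
      · exact Or.inl rfl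
      · exact hg p hp
    · refine ⟨[], (Z, e) :: g, by simp [hflat], ?_⟩
      intro p hp
      rcases List.mem_cons.mp hp with rfl | hp
      · exact Or.inr rfl
      · exact hg p hp

open XChar in
/-- Analysis of one aligned block. -/
lemma block_analysis {n : ℕ} {c : XChar n} {es Qk : List (Fin (3 * n))}
    (hc : c = star ∨ c = Z)
    (h : (c :: es.map elt) <+ (star :: (Qk.map elt ++ [Z]))) :
    (c = star ∧ ∀ u ∈ es, u ∈ Qk) ∨ (c = Z ∧ es = []) := by
  have hZn : (Z : XChar n) ∉ es.map elt := by simp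
  have hZq : (Z : XChar n) ∉ Qk.map elt := by simp
  rcases hc with rfl | rfl
  · left
    refine ⟨rfl, ?_⟩
    have h' : es.map elt <+ Qk.map elt ++ [Z] := List.cons_sublist_cons.mp h
    obtain ⟨l₁, l₂, heq, h₁, h₂⟩ := List.sublist_append_iff.mp h'
    have hl₂ : l₂ = [] := by
      cases (List.sublist_singleton.mp h₂) with
      | inl h => exact h
      | inr h => exact absurd (by rw [heq, h]; simp) hZn
    rw [hl₂, List.append_nil] at heq
    intro u hu
    have : elt u ∈ Qk.map elt := (heq ▸ h₁).subset (List.mem_map_of_mem hu)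
    simpa using this
  · right
    refine ⟨rfl, ?_⟩
    have h' : (Z :: es.map elt) <+ Qk.map elt ++ [Z] := by
      cases h with
      | cons _ h' => exact h'
    obtain ⟨l₁, l₂, heq, h₁, h₂⟩ := List.sublist_append_iff.mp h'
    have hl₁ : l₁ = [] := by
      cases l₁ with
      | nil => rfl
      | cons x l => 
        exfalso
        have hx : x = Z := by simpa using congrArg (fun l => l.head?) heq.symm
        exact hZq (h₁.subset (by rw [hx]; simp))
    rw [hl₁, List.nil_append] at heq
    rw [← heq] at h₂
    have := List.cons_sublist_cons.mp h₂
    simpa using this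

open XChar in
lemma sum_count_Y {n : ℕ} (g : List (XChar n × List (Fin (3 * n))))
    (hg : ∀ p ∈ g, p.1 ≠ Y) :
    ((g.map fun p => Y :: p.1 :: p.2.map elt).flatten).count Y = g.length := by
  induction g with
  | nil => rfl
  | cons p g ih =>
    have h1 : p.1 ≠ Y := hg p (by simp)
    have h2 : (Y : XChar n) ∉ p.2.map elt := by simp
    simp [List.count_append, List.count_cons, h1, List.count_eq_zero.mpr h2,
      ih fun x hx => hg x (by simp [hx])]

def isStar {n : ℕ} (p : XChar n × List (Fin (3 * n))) : Bool := p.1 == XChar.star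

open XChar in
lemma sum_count_star {n : ℕ} (g : List (XChar n × List (Fin (3 * n)))) :
    ((g.map fun p => Y :: p.1 :: p.2.map elt).flatten).count star
      = g.countP isStar := by
  induction g with
  | nil => rfl
  | cons p g ih =>
    have h2 : (star : XChar n) ∉ p.2.map elt := by simp
    rw [List.map_cons, List.flatten_cons, List.count_append, List.countP_cons, ih]
    unfold isStar
    simp [List.count_cons, List.count_eq_zero.mpr h2]
    by_cases h : p.1 = star <;> simp [h] <;> omega

open XChar in
lemma groups_glue {n : ℕ} (g : List (XChar n × List (Fin (3 * n)))) :
    (g.map fun p => Y :: p.1 :: p.2.map elt).flatten ++ [Y]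
      = Y :: glue Y (g.map fun p => p.1 :: p.2.map elt) := by
  induction g with
  | nil => rfl
  | cons p g ih => simp [glue_cons, ih]

open XChar in
/-- If there is a permutation `π` of the branch-strings such that `S1^π` is a
subsequence of `S2`, then the X3C instance has a solution: there exist `n` (distinct)
indices `p_1, …, p_n` with `⋃_j Q_{p_j} = U`. -/
theorem x3c_sublist_implies_solution (n m : ℕ) (hnm : n < m)
    (Q : Fin m → List (Fin (3 * n))) (hQlen : ∀ i, (Q i).length = 3)
    (B : List (List (XChar n))) (hB : B.Perm (branchStrings n m))
    (hsub : (B.flatten ++ [XChar.Y]).Sublist (xS2 n m Q)) :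
    ∃ p : Fin n → Fin m, Function.Injective p ∧
      ∀ u : Fin (3 * n), ∃ j : Fin n, u ∈ Q (p j) := by
  -- classification of branch strings
  have hclass : ∀ b ∈ B, (∃ i, b = [elt i]) ∨ b = [Y, star] ∨ b = [Y, Z] := by
    intro b hb
    have : b ∈ branchStrings n m := hB.mem_iff.mp hb
    simp only [branchStrings, List.mem_append, List.mem_map, List.mem_replicate,
      List.mem_finRange] at this
    rcases this with (⟨i, _, rfl⟩ | ⟨_, rfl⟩) | ⟨_, rfl⟩
    · exact Or.inl ⟨i, rfl⟩
    · exact Or.inr (Or.inl rfl)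
    · exact Or.inr (Or.inr rfl)
  obtain ⟨e, g, hflat, hg⟩ := decompB B hclass
  -- counts in the branch strings
  have hcount : ∀ a : XChar n, (B.flatten).count a = ((branchStrings n m).flatten).count a :=
    fun a => (hB.flatten).count_eq a
  have hYbr : ((branchStrings n m).flatten).count Y = m := by
    simp [branchStrings, List.count_flatten, List.map_replicate, Function.comp_def,
      List.count_cons]
    omega
  have hstarbr : ((branchStrings n m).flatten).count star = n := by
    simp [branchStrings, List.count_flatten, List.map_replicate, Function.comp_def,
      List.count_cons]
  have hemap : ∀ a : XChar n, (a = Y ∨ a = star) → a ∉ e.map elt := by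
    rintro a (rfl | rfl) h <;> simp at h
  -- g has length m
  have hglen : g.length = m := by
    have := hcount Y
    rw [hflat, List.count_append, hYbr,
      List.count_eq_zero.mpr (hemap Y (Or.inl rfl)),
      sum_count_Y g (fun p hp => by rcases hg p hp with h | h <;> simp [h])] at this
    simpa using this
  -- the number of star groups is n
  have hstarg : g.countP isStar = n := by
    have := hcount star
    rw [hflat, List.count_append, hstarbr,
      List.count_eq_zero.mpr (hemap star (Or.inr rfl)), sum_count_star g] at this
    simpa using this
  -- shapes
  set pieces : List (List (XChar n)) := g.map fun p => p.1 :: p.2.map elt with hpieces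
  set cores : List (List (XChar n)) :=
    (List.finRange m).map fun i => star :: ((Q i).map elt ++ [Z]) with hcores
  have hS1 : B.flatten ++ [Y] = e.map elt ++ (Y :: glue Y pieces) := by
    rw [hflat, List.append_assoc, groups_glue]
  have hS2 : xS2 n m Q = [] ++ (Y :: glue Y cores) := by
    simp only [xS2, glue, hcores, List.map_map, List.nil_append]
    congr 2
    exact List.map_congr_left fun i _ => by simp [hBlock, Function.comp_def]
  have hPy : ∀ l ∈ pieces, Y ∉ l := by
    intro l hl
    simp only [hpieces, List.mem_map] at hl
    obtain ⟨p, hp, rfl⟩ := hl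
    rcases hg p hp with h | h <;> simp [h]
  have hCy : ∀ l ∈ cores, Y ∉ l := by
    intro l hl
    simp only [hcores, List.mem_map] at hl
    obtain ⟨i, _, rfl⟩ := hl
    simp
  have hplen : pieces.length = m := by simp [hpieces, hglen]
  have hclen : cores.length = m := by simp [hcores]
  rw [hS1, hS2] at hsub
  obtain ⟨he, hglue⟩ := sublist_split hsub (hemap Y (Or.inl rfl)) (by simp)
    (by rw [count_glue hPy, count_glue hCy, hplen, hclen])
  have he0 : e = [] := by simpa using he
  -- align the pieces with the cores
  have halign := glue_align hglue (by rw [hplen, hclen]) hPy hCy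
  have hrel : ∀ x ∈ g.zip (List.finRange m),
      (x.1.1 :: x.1.2.map elt) <+ (star :: ((Q x.2).map elt ++ [Z])) := by
    intro x hx
    refine (List.forall₂_iff_zip.mp halign).2 ?_
    rw [hpieces, hcores, List.zip_map]
    exact List.mem_map.mpr ⟨x, hx, rfl⟩
  -- extract the star-block indices
  set zp := g.zip (List.finRange m) with hzp
  set s : List (Fin m) := (zp.filter fun x => isStar x.1).map Prod.snd with hs
  have hslen : s.length = n := by
    rw [hs, List.length_map, ← List.countP_eq_length_filter]
    have h1 : zp.countP (fun x => isStar x.1) = (zp.map Prod.fst).countP isStar := by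
      rw [List.countP_map]; rfl
    rw [h1, hzp, List.map_fst_zip (by simp [hglen])]
    exact hstarg
  have hsub' : s <+ List.finRange m := by
    have h1 : (zp.filter fun x => isStar x.1) <+ zp := List.filter_sublist
    have h2 := h1.map Prod.snd
    rwa [hzp, List.map_snd_zip (by simp [hglen])] at h2
  have hnodup : s.Nodup := (List.nodup_finRange m).sublist hsub'
  have hcov : ∀ u : Fin (3 * n), ∃ k ∈ s, u ∈ Q k := by
    intro u
    have hmem : elt u ∈ B.flatten := by
      apply List.mem_flatten.mpr
      refine ⟨[elt u], ?_, by simp⟩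
      apply hB.mem_iff.mpr
      simp [branchStrings]
    rw [hflat, he0] at hmem
    simp only [List.map_nil, List.nil_append, List.mem_flatten, List.mem_map] at hmem
    obtain ⟨l, ⟨p, hp, rfl⟩, hul⟩ := hmem
    have hup : u ∈ p.2 := by
      rcases List.mem_cons.mp hul with h | hul2
      · exact absurd h (by simp)
      rcases List.mem_cons.mp hul2 with h | h
      · rcases hg p hp with h' | h' <;> rw [h'] at h <;> exact absurd h (by simp)
      · simpa using h
    obtain ⟨x, hx, hxp⟩ : ∃ x ∈ zp, x.1 = p := by
      have hm : p ∈ zp.map Prod.fst := by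
        rw [hzp, List.map_fst_zip (by simp [hglen])]; exact hp
      obtain ⟨x, hx, hx2⟩ := List.mem_map.mp hm
      exact ⟨x, hx, hx2⟩
    have hrel' := hrel x hx
    rw [hxp] at hrel'
    rcases block_analysis (hg p hp) hrel' with ⟨hstar, hsubQ⟩ | ⟨_, hnil⟩
    · refine ⟨x.2, ?_, hsubQ u hup⟩
      rw [hs]
      exact List.mem_map.mpr ⟨x, List.mem_filter.mpr ⟨hx, by simp [isStar, hxp, hstar]⟩, rfl⟩
    · rw [hnil] at hup; simp at hup
  refine ⟨fun j => s.get (Fin.cast hslen.symm j), ?_, ?_⟩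
  · intro a b hab
    have h1 := (hnodup.get_inj_iff).mp hab
    simpa [Fin.ext_iff] using h1
  · intro u
    obtain ⟨k, hk, hkQ⟩ := hcov u
    obtain ⟨i, hi⟩ := List.get_of_mem hk
    refine ⟨Fin.cast hslen i, ?_⟩
    show u ∈ Q (s.get (Fin.cast hslen.symm (Fin.cast hslen i)))
    have hcc : Fin.cast hslen.symm (Fin.cast hslen i) = i := Fin.ext rfl
    rw [hcc, hi]
    exact hkQ
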